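/- The 2-MVPA M over Σ̃₂ with state set {q₀,q₁,q₂,q₃,q₄,q₅,q₆,p}, single initial state q₀, stack alphabet {x,⊥}, final state set {p}, push transitions (q₀,a₁,q₁,x), (q₂,a₂,q₃,x), (q₄,a₂,q₆,x), (q₅,a₂,q₆,x), pop transitions (q₁,b₂,⊥,q₀), (q₃,b₁,x,q₂), (q₃,b₁,⊥,q₄), (q₆,b₁,⊥,q₅), and internal transitions (q₀,d,q₂), (q₂,c,p), (q₅,c,p), is deterministic and accepts exactly the language L₀ = {(a₁b₂)^i d (a₂b₁)^j c : i,j ≥ 0, j ≠ i+1}, where the accepted language is the set of 2-phase words on which M has an accepting run. -/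

import Mathlib

/-- The "kind" of a letter in an `n`-stack call-return alphabet: each letter is
either a call letter of stack `i`, a return letter of stack `i`, or internal. -/
inductive SymKind (n : ℕ) where
  | call (i : Fin n)
  | ret (i : Fin n)
  | internal
deriving DecidableEq

/-- A multi-stack visibly pushdown automaton over an `n`-stack call-return alphabet,
given by the letter type `A` together with the partition `kind : A → SymKind n`. -/
structure MVPA (A : Type) (n : ℕ) (kind : A → SymKind n) where
  /-- finite set of states -/
  Q : Type
  [finQ : Fintype Q]
  /-- initial states -/
  QI : Set Q
  /-- finite stack alphabet -/
  Γ : Type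
  [finΓ : Fintype Γ]
  /-- distinguished bottom-of-stack symbol -/
  bot : Γ
  /-- push transitions `(q, a, q', γ)` for call letters `a` -/
  δpush : Q → A → Q → Γ → Prop
  /-- pop transitions `(q, a, γ, q')` for return letters `a` -/
  δpop : Q → A → Γ → Q → Prop
  /-- internal transitions `(q, a, q')` for internal letters `a` -/
  δint : Q → A → Q → Prop
  /-- final states -/
  QF : Set Q
  push_call : ∀ q a q' γ, δpush q a q' γ → (∃ i, kind a = .call i) ∧ γ ≠ bot
  pop_ret : ∀ q a γ q', δpop q a γ q' → ∃ i, kind a = .ret i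
  int_internal : ∀ q a q', δint q a q' → kind a = .internal

namespace MVPA

variable {A : Type} {n : ℕ} {kind : A → SymKind n}

/-- A configuration: a state together with the contents of the `n` stacks.
A stack is represented by the list of its symbols above the (implicit) bottom
symbol `⊥`; i.e. a stack word `γ₁⋯γ_m⊥ ∈ (Γ∖{⊥})*·{⊥}` is represented
as the list `[γ₁, …, γ_m]`. -/
abbrev Config (M : MVPA A n kind) : Type := M.Q × (Fin n → List M.Γ)

/-- One step of the automaton on letter `a`. -/
inductive Step (M : MVPA A n kind) : M.Config → A → M.Config → Prop where
  | push {q a q' γ C i} : kind a = .call i → M.δpush q a q' γ →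
      Step M (q, C) a (q', Function.update C i (γ :: C i))
  | popEmpty {q a q' C i} : kind a = .ret i → M.δpop q a M.bot q' → C i = [] →
      Step M (q, C) a (q', C)
  | pop {q a γ q'} {C C' : Fin n → List M.Γ} {i} : kind a = .ret i → M.δpop q a γ q' →
      γ ≠ M.bot → C i = γ :: C' i → (∀ j, j ≠ i → C' j = C j) →
      Step M (q, C) a (q', C')
  | internal {q a q' C} : kind a = .internal → M.δint q a q' →
      Step M (q, C) a (q', C)

/-- A run of the automaton on a word, from one configuration to another. -/
inductive Run (M : MVPA A n kind) : M.Config → List A → M.Config → Prop where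
  | nil (c) : Run M c [] c
  | cons {c₁ a c₂ w c₃} : Step M c₁ a c₂ → Run M c₂ w c₃ → Run M c₁ (a :: w) c₃

/-- There is an accepting run of `M` on `w`: a run starting in an initial state with
all stacks empty (i.e. containing just `⊥`) and ending in a final state. -/
def Accepts (M : MVPA A n kind) (w : List A) : Prop :=
  ∃ q₀ ∈ M.QI, ∃ c : M.Config, Run M (q₀, fun _ => []) w c ∧ c.1 ∈ M.QF

end MVPA

/-- A word is a phase if all return letters occurring in it belong to a single `Σ^i_r`. -/
def IsPhase {A : Type} {n : ℕ} (kind : A → SymKind n) (w : List A) : Prop :=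
  ∃ i : ℕ, ∀ a ∈ w, ∀ j : Fin n, kind a = .ret j → (j : ℕ) = i

/-- A word is a `k`-phase if it is a concatenation of at most `k` phases. -/
def IsKPhase {A : Type} {n : ℕ} (kind : A → SymKind n) (k : ℕ) (w : List A) : Prop :=
  ∃ ws : List (List A), ws.length ≤ k ∧ (∀ u ∈ ws, IsPhase kind u) ∧ ws.flatten = w

namespace MVPA

variable {A : Type} {n : ℕ} {kind : A → SymKind n}

/-- The language of `M`, viewed as a `k`-MVPA: the set of `k`-phase words on which
`M` has an accepting run. -/
def lang (M : MVPA A n kind) (k : ℕ) : Set (List A) :=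
  {w | IsKPhase kind k w ∧ M.Accepts w}

/-- `M` is deterministic: a unique initial state, and for each state `q`, letter `a`
and stack symbol `γ`, at most one transition of `δ` is applicable. -/
def Deterministic (M : MVPA A n kind) : Prop :=
  (∃ q, M.QI = {q}) ∧
  (∀ q a q₁ γ₁ q₂ γ₂, M.δpush q a q₁ γ₁ → M.δpush q a q₂ γ₂ → q₁ = q₂ ∧ γ₁ = γ₂) ∧
  (∀ q a γ q₁ q₂, M.δpop q a γ q₁ → M.δpop q a γ q₂ → q₁ = q₂) ∧
  (∀ q a q₁ q₂, M.δint q a q₁ → M.δint q a q₂ → q₁ = q₂)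

end MVPA

/-- The six-letter alphabet `Σ = {a₁, a₂, b₁, b₂, c, d}`. -/
inductive Letter where
  | a1 | a2 | b1 | b2 | c | d
deriving DecidableEq

instance : Fintype Letter :=
  ⟨{.a1, .a2, .b1, .b2, .c, .d}, by intro x; cases x <;> simp⟩

/-- The 2-stack call-return alphabet `Σ̃₂`: `Σ¹_c = {a₁}`, `Σ²_c = {a₂}`,
`Σ¹_r = {b₁}`, `Σ²_r = {b₂}`, `Σ_int = {c, d}`. -/
def kind2 : Letter → SymKind 2
  | .a1 => .call 0
  | .a2 => .call 1
  | .b1 => .ret 0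
  | .b2 => .ret 1
  | .c => .internal
  | .d => .internal

/-- `w^i`: the `i`-fold concatenation of the word `w`. -/
def wpow (w : List Letter) (i : ℕ) : List Letter :=
  (List.replicate i w).flatten


/-- The state set `{q₀, q₁, q₂, q₃, q₄, q₅, q₆, p}`. -/
inductive St where
  | q0 | q1 | q2 | q3 | q4 | q5 | q6 | p
deriving DecidableEq

instance : Fintype St :=
  ⟨{.q0, .q1, .q2, .q3, .q4, .q5, .q6, .p}, by intro x; cases x <;> simp⟩

/-- The stack alphabet `{x, ⊥}`. -/
inductive Gam where
  | x | bot
deriving DecidableEq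

instance : Fintype Gam :=
  ⟨{.x, .bot}, by intro x; cases x <;> simp⟩

/-- The 2-MVPA of Figure 1, recognizing `L₀ = {(a₁b₂)^i d (a₂b₁)^j c : i,j ≥ 0, j ≠ i+1}`. -/
def M1 : MVPA Letter 2 kind2 where
  Q := St
  QI := {.q0}
  Γ := Gam
  bot := .bot
  δpush := fun q a q' γ =>
    (q = .q0 ∧ a = .a1 ∧ q' = .q1 ∧ γ = .x) ∨
    (q = .q2 ∧ a = .a2 ∧ q' = .q3 ∧ γ = .x) ∨
    (q = .q4 ∧ a = .a2 ∧ q' = .q6 ∧ γ = .x) ∨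
    (q = .q5 ∧ a = .a2 ∧ q' = .q6 ∧ γ = .x)
  δpop := fun q a γ q' =>
    (q = .q1 ∧ a = .b2 ∧ γ = .bot ∧ q' = .q0) ∨
    (q = .q3 ∧ a = .b1 ∧ γ = .x ∧ q' = .q2) ∨
    (q = .q3 ∧ a = .b1 ∧ γ = .bot ∧ q' = .q4) ∨
    (q = .q6 ∧ a = .b1 ∧ γ = .bot ∧ q' = .q5)
  δint := fun q a q' =>
    (q = .q0 ∧ a = .d ∧ q' = .q2) ∨
    (q = .q2 ∧ a = .c ∧ q' = .p) ∨
    (q = .q5 ∧ a = .c ∧ q' = .p)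
  QF := {.p}
  push_call := by
    rintro q a q' γ (⟨rfl, rfl, rfl, rfl⟩ | ⟨rfl, rfl, rfl, rfl⟩ |
      ⟨rfl, rfl, rfl, rfl⟩ | ⟨rfl, rfl, rfl, rfl⟩) <;>
    exact ⟨⟨_, rfl⟩, by decide⟩
  pop_ret := by
    rintro q a γ q' (⟨rfl, rfl, rfl, rfl⟩ | ⟨rfl, rfl, rfl, rfl⟩ |
      ⟨rfl, rfl, rfl, rfl⟩ | ⟨rfl, rfl, rfl, rfl⟩) <;>
    exact ⟨_, rfl⟩
  int_internal := by
    rintro q a q' (⟨rfl, rfl, rfl⟩ | ⟨rfl, rfl, rfl⟩ | ⟨rfl, rfl, rfl⟩) <;> rfl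

/-!
On every reachable configuration both stacks consist of `x`s only, so `M1` is a deterministic
machine with two counters, the stack heights. Reading `(a₁b₂)^i d` leaves `i` on counter 1 and
nothing on counter 2. Each `a₂b₁` read in `q₂` decrements counter 1; when it is empty the
automaton passes to `q₄` and needs one more `a₂b₁` to reach `q₅`, where any further `(a₂b₁)^*`
is accepted. Hence the final `c` is read exactly when `j ≤ i` or `j ≥ i + 2`. A word of `L₀`
is a 2-phase word, split after `d`.
-/

namespace MVPA

variable {A : Type} {n : ℕ} {kind : A → SymKind n} {M : MVPA A n kind}

theorem run_nil_iff {c c' : M.Config} : M.Run c [] c' ↔ c' = c := by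
  constructor
  · rintro ⟨⟩; rfl
  · rintro rfl; exact .nil _

theorem run_cons_iff {c c' : M.Config} {a : A} {w : List A} :
    M.Run c (a :: w) c' ↔ ∃ c₂, M.Step c a c₂ ∧ M.Run c₂ w c' := by
  constructor
  · rintro ⟨⟩; exact ⟨_, ‹_›, ‹_›⟩
  · rintro ⟨c₂, hs, hr⟩; exact .cons hs hr

theorem step_iff_of_call {a : A} {i : Fin n} (ha : kind a = .call i) {q : M.Q}
    {C : Fin n → List M.Γ} {c : M.Config} :
    M.Step (q, C) a c ↔ ∃ q' γ, M.δpush q a q' γ ∧ c = (q', Function.update C i (γ :: C i)) := by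
  constructor
  · rintro (⟨hk, hδ⟩ | ⟨hk⟩ | ⟨hk⟩ | ⟨hk⟩) <;> rw [ha] at hk <;> cases hk
    exact ⟨_, _, hδ, rfl⟩
  · rintro ⟨q', γ, hδ, rfl⟩; exact .push ha hδ

theorem step_iff_of_ret {a : A} {i : Fin n} (ha : kind a = .ret i) {q q' : M.Q}
    {C C' : Fin n → List M.Γ} :
    M.Step (q, C) a (q', C') ↔
      (M.δpop q a M.bot q' ∧ C i = [] ∧ C' = C) ∨
      ∃ γ ≠ M.bot, M.δpop q a γ q' ∧ (C i).head? = some γ ∧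
        C' = Function.update C i (C i).tail := by
  constructor
  · rintro (⟨hk⟩ | ⟨hk, hδ, hC⟩ | ⟨hk, hδ, hγ, hC, hC'⟩ | ⟨hk⟩) <;> rw [ha] at hk <;> cases hk
    · exact .inl ⟨hδ, hC, rfl⟩
    · refine .inr ⟨_, hγ, hδ, by simp [hC], funext fun j => ?_⟩
      by_cases hj : j = i
      · subst hj; simp [hC]
      · simp [Function.update_of_ne hj, hC' j hj]
  · rintro (⟨hδ, hC, rfl⟩ | ⟨γ, hγ, hδ, hC, rfl⟩)
    · exact .popEmpty ha hδ hC
    · refine .pop ha hδ hγ ?_ fun j hj => Function.update_of_ne hj _ _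
      simpa using List.eq_cons_of_mem_head? hC

theorem step_iff_of_internal {a : A} (ha : kind a = .internal) {q q' : M.Q}
    {C C' : Fin n → List M.Γ} :
    M.Step (q, C) a (q', C') ↔ M.δint q a q' ∧ C' = C := by
  constructor
  · rintro (⟨hk⟩ | ⟨hk⟩ | ⟨hk⟩ | ⟨hk, hδ⟩) <;> rw [ha] at hk <;> cases hk
    exact ⟨hδ, rfl⟩
  · rintro ⟨hδ, rfl⟩; exact .internal ha hδ

end MVPA

theorem IsPhase.of_subset {A : Type} {n : ℕ} {kind : A → SymKind n} {u w : List A}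
    (hu : IsPhase kind u) (h : w ⊆ u) : IsPhase kind w :=
  let ⟨i, hi⟩ := hu
  ⟨i, fun a ha => hi a (h ha)⟩

theorem Function.update_vec_two_zero {α : Type*} (u v w : α) :
    Function.update ![u, v] 0 w = ![w, v] := by
  funext k; fin_cases k <;> rfl

theorem Function.update_vec_two_one {α : Type*} (u v w : α) :
    Function.update ![u, v] 1 w = ![u, w] := by
  funext k; fin_cases k <;> rfl

@[simp] theorem wpow_zero (w : List Letter) : wpow w 0 = [] := rfl

@[simp] theorem wpow_succ (w : List Letter) (i : ℕ) : wpow w (i + 1) = w ++ wpow w i := by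
  simp [wpow, List.replicate_succ]

theorem wpow_add (w : List Letter) (i j : ℕ) : wpow w (i + j) = wpow w i ++ wpow w j := by
  rw [wpow, wpow, wpow, List.replicate_add, List.flatten_append]

theorem wpow_subset (w : List Letter) (i : ℕ) : wpow w i ⊆ w := by
  intro l hl
  obtain ⟨u, hu, hl⟩ := List.mem_flatten.1 hl
  rwa [List.eq_of_mem_replicate hu] at hl

namespace M1

open Letter St

/-- `M1` on the configurations `toConfig (s, a, b)`, whose stacks hold `a` and `b` copies of `x`;
`none` means that no transition applies. -/
def counterStep : St × ℕ × ℕ → Letter → Option (St × ℕ × ℕ)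
  | (q0, a, b), a1 => some (q1, a + 1, b)
  | (q2, a, b), a2 => some (q3, a, b + 1)
  | (q4, a, b), a2 => some (q6, a, b + 1)
  | (q5, a, b), a2 => some (q6, a, b + 1)
  | (q1, a, 0), b2 => some (q0, a, 0)
  | (q3, a + 1, b), b1 => some (q2, a, b)
  | (q3, 0, b), b1 => some (q4, 0, b)
  | (q6, 0, b), b1 => some (q5, 0, b)
  | (q0, a, b), d => some (q2, a, b)
  | (q2, a, b), c => some (p, a, b)
  | (q5, a, b), c => some (p, a, b)
  | _, _ => none

def toConfig (t : St × ℕ × ℕ) : M1.Config :=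
  (t.1, ![List.replicate t.2.1 .x, List.replicate t.2.2 .x])

theorem step_toConfig_iff {t : St × ℕ × ℕ} {l : Letter} {c : M1.Config} :
    M1.Step (toConfig t) l c ↔ ∃ t', counterStep t l = some t' ∧ c = toConfig t' := by
  obtain ⟨s, a, b⟩ := t
  obtain ⟨q', C'⟩ := c
  simp only [toConfig]
  cases l <;>
    first
    | refine (MVPA.step_iff_of_call (M := M1) rfl).trans ?_
    | refine (MVPA.step_iff_of_ret (M := M1) rfl).trans ?_
    | refine (MVPA.step_iff_of_internal (M := M1) rfl).trans ?_
  all_goals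
    cases s <;> rcases a with _ | a <;> rcases b with _ | b <;>
      simp [M1, counterStep, Prod.ext_iff, Function.update_vec_two_zero,
        Function.update_vec_two_one, List.replicate_succ]

theorem run_toConfig_iff {t : St × ℕ × ℕ} {w : List Letter} {c : M1.Config} :
    M1.Run (toConfig t) w c ↔ ∃ t', w.foldlM counterStep t = some t' ∧ c = toConfig t' := by
  induction w generalizing t with
  | nil => simp [MVPA.run_nil_iff]
  | cons l w ih =>
    rw [MVPA.run_cons_iff, List.foldlM_cons]
    constructor
    · rintro ⟨_, hs, hr⟩
      obtain ⟨t₂, ht₂, rfl⟩ := step_toConfig_iff.1 hs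
      obtain ⟨t', h, rfl⟩ := ih.1 hr
      exact ⟨t', by simp [ht₂, h], rfl⟩
    · rintro ⟨t', h, rfl⟩
      obtain ⟨t₂, ht₂, h⟩ := Option.bind_eq_some_iff.1 h
      exact ⟨_, step_toConfig_iff.2 ⟨t₂, ht₂, rfl⟩, ih.2 ⟨t', h, rfl⟩⟩

theorem accepts_iff_foldlM {w : List Letter} :
    M1.Accepts w ↔ ∃ a b, w.foldlM counterStep (q0, 0, 0) = some (p, a, b) := by
  have hinit : ((q0, fun _ => []) : M1.Config) = toConfig (q0, 0, 0) := by
    refine Prod.ext rfl (funext fun k => ?_)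
    fin_cases k <;> rfl
  constructor
  · rintro ⟨q₀, rfl, c, hrun, hp⟩
    rw [hinit, run_toConfig_iff] at hrun
    obtain ⟨⟨s, a, b⟩, h, rfl⟩ := hrun
    obtain rfl : s = p := hp
    exact ⟨a, b, h⟩
  · rintro ⟨a, b, h⟩
    refine ⟨q0, rfl, toConfig (p, a, b), ?_, rfl⟩
    rw [hinit, run_toConfig_iff]
    exact ⟨_, h, rfl⟩

/-- An over-approximation of the words leading from state `s`, with `a` symbols on stack 1, to
`p`: the remaining constraints coming from the stack heights are dropped. -/
def GoodSuffix : St → ℕ → List Letter → Prop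
  | q0, a, w => ∃ i j, j ≠ a + i + 1 ∧ w = wpow [a1, b2] i ++ [d] ++ wpow [a2, b1] j ++ [c]
  | q1, a, w => ∃ i j, j ≠ a + i + 1 ∧ w = b2 :: (wpow [a1, b2] i ++ [d] ++ wpow [a2, b1] j ++ [c])
  | q2, a, w => ∃ j, j ≠ a + 1 ∧ w = wpow [a2, b1] j ++ [c]
  | q3, a, w => ∃ j, j ≠ a ∧ w = b1 :: (wpow [a2, b1] j ++ [c])
  | q4, _, w => ∃ j, j ≠ 0 ∧ w = wpow [a2, b1] j ++ [c]
  | q5, _, w => ∃ j, w = wpow [a2, b1] j ++ [c]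
  | q6, _, w => ∃ j, w = b1 :: (wpow [a2, b1] j ++ [c])
  | p, _, w => w = []

theorem goodSuffix_of_foldlM {w : List Letter} {s : St} {a b a' b' : ℕ}
    (h : w.foldlM counterStep (s, a, b) = some (p, a', b')) : GoodSuffix s a w := by
  induction w generalizing s a b with
  | nil =>
    obtain ⟨rfl, -⟩ : s = p ∧ _ := by simpa using h
    rfl
  | cons l w ih =>
    obtain ⟨⟨s₂, a₂, b₂⟩, hstep, hrest⟩ := Option.bind_eq_some_iff.1 h
    have hw := ih hrest
    unfold counterStep at hstep
    split at hstep <;> cases hstep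
    all_goals
      rename_i heq
      cases heq
      simp only [GoodSuffix] at hw ⊢
    -- one case per transition, in the order of `counterStep`
    · obtain ⟨i, j, hj, rfl⟩ := hw
      exact ⟨i + 1, j, by omega, by simp⟩
    · obtain ⟨j, hj, rfl⟩ := hw
      exact ⟨j + 1, by omega, by simp⟩
    · obtain ⟨j, rfl⟩ := hw
      exact ⟨j + 1, j.succ_ne_zero, by simp⟩
    · obtain ⟨j, rfl⟩ := hw
      exact ⟨j + 1, by simp⟩
    · obtain ⟨i, j, hj, rfl⟩ := hw
      exact ⟨i, j, hj, rfl⟩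
    · obtain ⟨j, hj, rfl⟩ := hw
      exact ⟨j, by omega, rfl⟩
    · obtain ⟨j, hj, rfl⟩ := hw
      exact ⟨j, hj, rfl⟩
    · obtain ⟨j, rfl⟩ := hw
      exact ⟨j, rfl⟩
    · obtain ⟨j, hj, rfl⟩ := hw
      exact ⟨0, j, by omega, by simp⟩
    · subst hw
      exact ⟨0, by omega, rfl⟩
    · subst hw
      exact ⟨0, rfl⟩

theorem foldlM_wpow_a1b2 (i a : ℕ) :
    (wpow [a1, b2] i).foldlM counterStep (q0, a, 0) = some (q0, a + i, 0) := by
  induction i generalizing a with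
  | zero => rfl
  | succ i ih => simp [counterStep, ih, Nat.add_assoc, Nat.add_comm 1]

theorem foldlM_wpow_a2b1_of_q2 (j a b : ℕ) :
    (wpow [a2, b1] j).foldlM counterStep (q2, j + a, b) = some (q2, a, b + j) := by
  induction j generalizing b with
  | zero => simp
  | succ j ih => simp [counterStep, Nat.add_right_comm j 1 a, ih, Nat.add_assoc, Nat.add_comm 1]

theorem foldlM_wpow_a2b1_of_q5 (j b : ℕ) :
    (wpow [a2, b1] j).foldlM counterStep (q5, 0, b) = some (q5, 0, b + j) := by
  induction j generalizing b with
  | zero => rfl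
  | succ j ih => simp [counterStep, ih, Nat.add_assoc, Nat.add_comm 1]

theorem foldlM_wpow_a2b1_c {j a b : ℕ} (hj : j ≠ a + 1) :
    ∃ a' b', (wpow [a2, b1] j ++ [c]).foldlM counterStep (q2, a, b) = some (p, a', b') := by
  rcases Nat.lt_or_ge a j with hlt | hle
  · obtain ⟨k, rfl⟩ := Nat.exists_eq_add_of_le (show a + 2 ≤ j by omega)
    refine ⟨0, b + a + 2 + k, ?_⟩
    have hq2 : (wpow [a2, b1] a).foldlM counterStep (q2, a, b) = some (q2, 0, b + a) := by
      simpa using foldlM_wpow_a2b1_of_q2 a 0 b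
    rw [wpow_add, wpow_add]
    simp [counterStep, hq2, foldlM_wpow_a2b1_of_q5, Nat.add_assoc]
  · obtain ⟨a, rfl⟩ := Nat.exists_eq_add_of_le hle
    refine ⟨a, b + j, ?_⟩
    simp [counterStep, foldlM_wpow_a2b1_of_q2]

theorem deterministic : M1.Deterministic := by
  refine ⟨⟨q0, rfl⟩, ?_, ?_, ?_⟩ <;>
  · intros
    simp only [M1] at *
    aesop

theorem accepts_iff {w : List Letter} : M1.Accepts w ↔
    ∃ i j : ℕ, j ≠ i + 1 ∧ w = wpow [a1, b2] i ++ [d] ++ wpow [a2, b1] j ++ [c] := by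
  rw [accepts_iff_foldlM]
  constructor
  · rintro ⟨a, b, h⟩
    obtain ⟨i, j, hj, rfl⟩ := goodSuffix_of_foldlM h
    exact ⟨i, j, by simpa using hj, rfl⟩
  · rintro ⟨i, j, hj, rfl⟩
    obtain ⟨a, b, h⟩ := foldlM_wpow_a2b1_c (b := 0) hj
    exact ⟨a, b, by simpa [List.foldlM_append, foldlM_wpow_a1b2, counterStep] using h⟩

end M1

theorem isKPhase_two_L0_word (i j : ℕ) :
    IsKPhase kind2 2 (wpow [.a1, .b2] i ++ [.d] ++ wpow [.a2, .b1] j ++ [.c]) := by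
  have h₁ : IsPhase kind2 (wpow [.a1, .b2] i ++ [.d]) :=
    IsPhase.of_subset (u := [.a1, .b2, .d]) ⟨1, by decide⟩
      (List.append_subset.2 ⟨List.Subset.trans (wpow_subset _ _) (by simp), by simp⟩)
  have h₂ : IsPhase kind2 (wpow [.a2, .b1] j ++ [.c]) :=
    IsPhase.of_subset (u := [.a2, .b1, .c]) ⟨0, by decide⟩
      (List.append_subset.2 ⟨List.Subset.trans (wpow_subset _ _) (by simp), by simp⟩)
  refine ⟨[wpow [.a1, .b2] i ++ [.d], wpow [.a2, .b1] j ++ [.c]], le_rfl, ?_, by simp⟩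
  simpa using ⟨h₁, h₂⟩

/-- The 2-MVPA `M1` is deterministic and accepts exactly
`L₀ = {(a₁b₂)^i d (a₂b₁)^j c : i, j ≥ 0, j ≠ i+1}`. -/
theorem M1_deterministic_and_lang :
    M1.Deterministic ∧
    M1.lang 2 = {w | ∃ i j : ℕ, j ≠ i + 1 ∧
      w = wpow [.a1, .b2] i ++ [.d] ++ wpow [.a2, .b1] j ++ [.c]} := by
  refine ⟨M1.deterministic, Set.ext fun w => ?_⟩
  rw [MVPA.lang, Set.mem_ofPred_eq, Set.mem_ofPred_eq, M1.accepts_iff]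
  refine and_iff_right_of_imp ?_
  rintro ⟨i, j, -, rfl⟩
  exact isKPhase_two_L0_word i j
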